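/- Case of the general cut-in-box lemma for output with the boxed endpoint in the continuation: suppose P ⊢ Δ, x:A, and Q = z[v].(S , T) with w ∈ fn(T), typed by the ⊗ rule from S ⊢ Δ', {Δi}_i, v:C and T ⊢ Γ', [Ψ1]⟨z: w:A⊥⟩[Ψ2] y:B, {[Ψ_{u_i}] u_i:C_i}_i, [Ψz] z:D, with conclusion Q ⊢ Γ', ⟨z: Δ'⟩[Ψ1]⟨z: w:A⊥⟩[Ψ2] y:B, {⟨z: Δi⟩[Ψ_{u_i}] u_i:C_i}_i, [Ψz] z:(C ⊗^{y ũ} D). If R0 is a process with R0 ⊢^Cut Γ', [Ψ1]⟨z: Δ⟩[Ψ2] y:B, {[Ψ_{u_i}] u_i:C_i}_i, [Ψz] z:D and rank(R0) = size(A) (given by the induction hypothesis applied to P and the subprocess T), then R = z[v].(S , R0) satisfies R ⊢^Cut Γ', ⟨z: Δ'⟩[Ψ1]⟨z: Δ⟩[Ψ2] y:B, {⟨z: Δi⟩[Ψ_{u_i}] u_i:C_i}_i, [Ψz] z:(C ⊗^{y ũ} D) with rank(R) = size(A). -/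

import Mathlib

/-!
A formalization of a session-typed process calculus corresponding to
classical linear logic with boxes: formulas carry endpoint annotations,
typing environments consist of endpoint typings `x : A` prefixed by boxed
contexts `[Ψ]` and box entries `⟨z: Δ⟩` / label entries `⟨z: ℓ⟩`,
and the Cut rule's conclusion is obtained from the two premisses by the
configuration rewriting `→*_distr` followed by `→*_subst`.
-/

namespace Boxes

/-- Endpoint names. -/
abbrev Name := ℕ

/-- Labels that may occur as (bracketed) box entries: the additive selection
labels `L`/`R`, the closed-box marker `∗` and the exponential marker `𝒬`. -/
inductive Label : Type
  | left | right | star | srvq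
  deriving DecidableEq

/-- Formulas of classical linear logic, each connective carrying a list of
endpoint annotations; `term` is the type `·` of a terminated endpoint. -/
inductive Form : Type
  | atom : ℕ → Form
  | natom : ℕ → Form
  | tensor : List Name → Form → Form → Form
  | parr : List Name → Form → Form → Form
  | oplus : List Name → Form → Form → Form
  | with_ : List Name → Form → Form → Form
  | one : List Name → Form
  | bot : List Name → Form
  | bang : List Name → Form → Form
  | quest : List Name → Form → Form
  | term : Form
  deriving DecidableEq

/-- `size A` = number of connectives of `A`. -/
def Form.size : Form → ℕ
  | .atom _ => 0
  | .natom _ => 0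
  | .tensor _ A B => A.size + B.size + 1
  | .parr _ A B => A.size + B.size + 1
  | .oplus _ A B => A.size + B.size + 1
  | .with_ _ A B => A.size + B.size + 1
  | .one _ => 1
  | .bot _ => 1
  | .bang _ A => A.size + 1
  | .quest _ A => A.size + 1
  | .term => 0

/-- Linear-logic duality `A⊥`; since dual occurrences of a connective carry
independent annotations, duality is a relation that ignores annotations. -/
inductive Dual : Form → Form → Prop
  | atom (n) : Dual (.atom n) (.natom n)
  | natom (n) : Dual (.natom n) (.atom n)
  | tensor {A A' B B'} (a b) : Dual A A' → Dual B B' →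
      Dual (.tensor a A B) (.parr b A' B')
  | parr {A A' B B'} (a b) : Dual A A' → Dual B B' →
      Dual (.parr a A B) (.tensor b A' B')
  | oplus {A A' B B'} (a b) : Dual A A' → Dual B B' →
      Dual (.oplus a A B) (.with_ b A' B')
  | with_ {A A' B B'} (a b) : Dual A A' → Dual B B' →
      Dual (.with_ a A B) (.oplus b A' B')
  | one (a b) : Dual (.one a) (.bot b)
  | bot (a b) : Dual (.bot a) (.one b)
  | bang {A A'} (a b) : Dual A A' → Dual (.bang a A) (.quest b A')
  | quest {A A'} (a b) : Dual A A' → Dual (.quest a A) (.bang b A')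
  | term : Dual .term .term

/-- `A.hasAnn y` : `y` occurs in some connective annotation of `A`;
this formalizes the context notation `A{⊗^{y z̃}}` etc. -/
def Form.hasAnn (y : Name) : Form → Prop
  | .atom _ => False
  | .natom _ => False
  | .term => False
  | .tensor a A B => y ∈ a ∨ A.hasAnn y ∨ B.hasAnn y
  | .parr a A B => y ∈ a ∨ A.hasAnn y ∨ B.hasAnn y
  | .oplus a A B => y ∈ a ∨ A.hasAnn y ∨ B.hasAnn y
  | .with_ a A B => y ∈ a ∨ A.hasAnn y ∨ B.hasAnn y
  | .one a => y ∈ a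
  | .bot a => y ∈ a
  | .bang a A => y ∈ a ∨ A.hasAnn y
  | .quest a A => y ∈ a ∨ A.hasAnn y

/-- Splice the list `ws` for every occurrence of `y` in a list of names;
with `ws = [z]` this is the renaming `[z/y]`, and with a general list it is
the redistribution `y ⇝ ws`. -/
def spliceL (y : Name) (ws : List Name) (l : List Name) : List Name :=
  l.foldr (fun n acc => (if n = y then ws else [n]) ++ acc) []

/-- Splice `ws` for `y` in all annotations of a formula. -/
def Form.splice (y : Name) (ws : List Name) : Form → Form
  | .atom n => .atom n
  | .natom n => .natom n
  | .term => .term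
  | .tensor a A B => .tensor (spliceL y ws a) (A.splice y ws) (B.splice y ws)
  | .parr a A B => .parr (spliceL y ws a) (A.splice y ws) (B.splice y ws)
  | .oplus a A B => .oplus (spliceL y ws a) (A.splice y ws) (B.splice y ws)
  | .with_ a A B => .with_ (spliceL y ws a) (A.splice y ws) (B.splice y ws)
  | .one a => .one (spliceL y ws a)
  | .bot a => .bot (spliceL y ws a)
  | .bang a A => .bang (spliceL y ws a) (A.splice y ws)
  | .quest a A => .quest (spliceL y ws a) (A.splice y ws)

mutual
  /-- A prefix of bracketed entries decorating an endpoint typing: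
  `Pre.box z̃ Δ p` is the box entry `⟨z̃: Δ⟩` followed by `p`, and
  `Pre.lab z̃ ℓ p` is the label entry `⟨z̃: ℓ⟩` followed by `p`.
  A boxed context `[Ψ]` is just such a sequence of entries. -/
  inductive Pre : Type
    | nil : Pre
    | box : List Name → Ctx → Pre → Pre
    | lab : List Name → Label → Pre → Pre

  /-- Typing environments: a list of hypotheses `[Ψ] x : A`
  (a prefix, an endpoint and a formula). -/
  inductive Ctx : Type
    | nil : Ctx
    | cons : Pre → Name → Form → Ctx → Ctx
end

def Pre.append : Pre → Pre → Pre
  | .nil, q => q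
  | .box a Δ p, q => .box a Δ (p.append q)
  | .lab a l p, q => .lab a l (p.append q)

instance : Append Pre := ⟨Pre.append⟩

def Ctx.append : Ctx → Ctx → Ctx
  | .nil, Δ => Δ
  | .cons p x A Γ, Δ => .cons p x A (Γ.append Δ)

instance : Append Ctx := ⟨Ctx.append⟩

/-- The singleton environment `[Ψ] x : A`. -/
def Ctx.single (p : Pre) (x : Name) (A : Form) : Ctx := .cons p x A .nil

def joinC (l : List Ctx) : Ctx := l.foldr (· ++ ·) .nil

def joinPre (l : List Pre) : Pre := l.foldr (· ++ ·) .nil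

/-- Environment built from a list of hypotheses. -/
def hyps (l : List (Pre × Name × Form)) : Ctx :=
  l.foldr (fun h acc => .cons h.1 h.2.1 h.2.2 acc) .nil

mutual
  /-- Splice `ws` for `y` in all annotations occurring in a prefix. -/
  def Pre.splice (y : Name) (ws : List Name) : Pre → Pre
    | .nil => .nil
    | .box a Δ p => .box (spliceL y ws a) (Ctx.splice y ws Δ) (Pre.splice y ws p)
    | .lab a l p => .lab (spliceL y ws a) l (Pre.splice y ws p)

  /-- Splice `ws` for `y` in all annotations occurring in an environment. -/
  def Ctx.splice (y : Name) (ws : List Name) : Ctx → Ctx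
    | .nil => .nil
    | .cons p x A Γ => .cons (Pre.splice y ws p) x (Form.splice y ws A) (Ctx.splice y ws Γ)
end

/-- Permutation of environments (environments are multisets of hypotheses). -/
inductive CtxPerm : Ctx → Ctx → Prop
  | nil : CtxPerm .nil .nil
  | cons (p x A) {Γ Γ'} : CtxPerm Γ Γ' → CtxPerm (.cons p x A Γ) (.cons p x A Γ')
  | swap (p x A q y B Γ) :
      CtxPerm (.cons p x A (.cons q y B Γ)) (.cons q y B (.cons p x A Γ))
  | trans {Γ₁ Γ₂ Γ₃} : CtxPerm Γ₁ Γ₂ → CtxPerm Γ₂ Γ₃ → CtxPerm Γ₁ Γ₃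

/-- Processes. -/
inductive Proc : Type
  | fwd : Name → Name → Proc                -- forwarder [a↔b]
  | close : Name → Proc                     -- a[]
  | wait : Name → Proc → Proc               -- a().P
  | output : Name → Name → Proc → Proc → Proc  -- z[v].(P | Q)
  | input : Name → Name → Proc → Proc       -- u(v).P
  | inl : Name → Proc → Proc                -- y◁inl.P
  | inr : Name → Proc → Proc                -- y◁inr.P
  | pcase : Name → Proc → Proc → Proc       -- case x {P ; Q}
  | srv : Name → Name → Proc → Proc         -- !x(a).P
  | client : Name → Name → Proc → Proc      -- ?y[b].P
  | cut : Name → Name → Proc → Proc → Proc  -- (ν x y)(P | Q)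

def ren (a b n : Name) : Name := if n = a then b else n

/-- Rename the (free) endpoint `a` to `b` in a process. -/
def Proc.rename (a b : Name) : Proc → Proc
  | .fwd u v => .fwd (ren a b u) (ren a b v)
  | .close u => .close (ren a b u)
  | .wait u P => .wait (ren a b u) (P.rename a b)
  | .output u v P Q => .output (ren a b u) (ren a b v) (P.rename a b) (Q.rename a b)
  | .input u v P => .input (ren a b u) (ren a b v) (P.rename a b)
  | .inl u P => .inl (ren a b u) (P.rename a b)
  | .inr u P => .inr (ren a b u) (P.rename a b)
  | .pcase u P Q => .pcase (ren a b u) (P.rename a b) (Q.rename a b)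
  | .srv u v P => .srv (ren a b u) (ren a b v) (P.rename a b)
  | .client u v P => .client (ren a b u) (ren a b v) (P.rename a b)
  | .cut u v P Q => .cut (ren a b u) (ren a b v) (P.rename a b) (Q.rename a b)

/-- Free names of a process. -/
def Proc.fn : Proc → Set Name
  | .fwd a b => {a, b}
  | .close a => {a}
  | .wait a P => {a} ∪ P.fn
  | .output z v P Q => {z} ∪ (P.fn \ {v}) ∪ Q.fn
  | .input u v P => {u} ∪ (P.fn \ {v})
  | .inl a P => {a} ∪ P.fn
  | .inr a P => {a} ∪ P.fn
  | .pcase a P Q => {a} ∪ P.fn ∪ Q.fn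
  | .srv x a P => {x} ∪ (P.fn \ {a})
  | .client y b P => {y} ∪ (P.fn \ {b})
  | .cut x y P Q => (P.fn \ {x}) ∪ (Q.fn \ {y})

/-- An annotated sequent `Γ ▷ [Ψ] x : A` of a configuration: the part after
`▷` designates the distinguished cut endpoint. -/
structure Seq where
  ctx : Ctx
  pre : Pre
  ep : Name
  ty : Form

/-- A configuration is a (two-element, for a single cut) list of annotated
sequents. -/
abbrev Config := List Seq

/-- Target hypotheses `{[Ψ1_c][Ψ_c] c : C}` of a distribution step. -/
def tgts (l : List (Pre × Pre × Name × Form × Ctx)) : Ctx :=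
  hyps (l.map fun t => (t.1 ++ t.2.1, t.2.2.1, t.2.2.2.1))

/-- The same targets after receiving their pieces `⟨z: Δ_c⟩` of the
distributed box entry. -/
def tgtsBox (z : Name) (l : List (Pre × Pre × Name × Form × Ctx)) : Ctx :=
  hyps (l.map fun t => (t.1 ++ Pre.box [z] t.2.2.2.2 t.2.1, t.2.2.1, t.2.2.2.1))

def tgtsL (l : List (Pre × Pre × Name × Form)) : Ctx :=
  hyps (l.map fun t => (t.1 ++ t.2.1, t.2.2.1, t.2.2.2))

/-- The same targets after receiving a copy `⟨d: ℓ⟩` of the distributed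
label entry. -/
def tgtsLab (d : Name) (lb : Label) (l : List (Pre × Pre × Name × Form)) : Ctx :=
  hyps (l.map fun t => (t.1 ++ Pre.lab [d] lb t.2.1, t.2.2.1, t.2.2.2))

/-- Distribution `→_distr`: a bracketed entry on the cut endpoint of one
component is distributed among hypotheses of the other component, and the
annotation pointing at the cut endpoint is updated accordingly. -/
inductive DistrStep : Config → Config → Prop
  | box {Γ1 Γ2 : Ctx} {Ψz Ψ1 Ψ2 : Pre} {z x y : Name} {B A A' : Form}
      (ts : List (Pre × Pre × Name × Form × Ctx)) :
      B.hasAnn x →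
      DistrStep
        [⟨Γ1 ++ Ctx.single Ψz z B,
            Pre.box [z] (joinC (ts.map fun t => t.2.2.2.2)) Ψ1, x, A⟩,
         ⟨Γ2 ++ tgts ts, Ψ2, y, A'⟩]
        [⟨Γ1 ++ Ctx.single Ψz z (B.splice x (ts.map fun t => t.2.2.1)), Ψ1, x, A⟩,
         ⟨Γ2 ++ tgtsBox z ts, Ψ2, y, A'⟩]
  | lab {Γ1 Γ2 : Ctx} {Ψd Ψ1 Ψ2 : Pre} {d x y : Name} {D A A' : Form}
      (lb : Label) (ts : List (Pre × Pre × Name × Form)) :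
      D.hasAnn x →
      DistrStep
        [⟨Γ1 ++ Ctx.single Ψd d D, Pre.lab [d] lb Ψ1, x, A⟩,
         ⟨Γ2 ++ tgtsL ts, Ψ2, y, A'⟩]
        [⟨Γ1 ++ Ctx.single Ψd d (D.splice x (ts.map fun t => t.2.2.1)), Ψ1, x, A⟩,
         ⟨Γ2 ++ tgtsLab d lb ts, Ψ2, y, A'⟩]
  | swap {s1 s2 t1 t2 : Seq} :
      DistrStep [s1, s2] [t1, t2] → DistrStep [s2, s1] [t2, t1]

/-- Substitution `→_subst`: when the outermost connectives of the two dual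
cut formulas are consumed, every annotation pointing at one cut endpoint is
replaced by the annotation list of the dual connective. -/
inductive SubstStep : Config → Config → Prop
  | mult {Γ1 Γ2 : Ctx} {p1 p2 : Pre} {x y : Name} {A A' B B' : Form}
      (as bs : List Name) : Dual A A' →
      SubstStep
        [⟨Γ1, p1, x, .parr as A B⟩, ⟨Γ2, p2, y, .tensor bs A' B'⟩]
        [⟨Γ1.splice x bs, p1, x, B⟩, ⟨Γ2.splice y as, p2, y, B'⟩]
  | addL {Γ1 Γ2 : Ctx} {p1 p2 : Pre} {x y : Name} {A A' B B' : Form}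
      (as bs : List Name) : Dual A A' →
      SubstStep
        [⟨Γ1, p1, x, .with_ as A B⟩, ⟨Γ2, p2, y, .oplus bs A' B'⟩]
        [⟨Γ1.splice x bs, p1, x, A⟩, ⟨Γ2.splice y as, p2, y, A'⟩]
  | addR {Γ1 Γ2 : Ctx} {p1 p2 : Pre} {x y : Name} {A A' B B' : Form}
      (as bs : List Name) : Dual B B' →
      SubstStep
        [⟨Γ1, p1, x, .with_ as A B⟩, ⟨Γ2, p2, y, .oplus bs A' B'⟩]
        [⟨Γ1.splice x bs, p1, x, B⟩, ⟨Γ2.splice y as, p2, y, B'⟩]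
  | exp {Γ1 Γ2 : Ctx} {p1 p2 : Pre} {x y : Name} {A A' : Form}
      (as bs : List Name) : Dual A A' →
      SubstStep
        [⟨Γ1, p1, x, .bang as A⟩, ⟨Γ2, p2, y, .quest bs A'⟩]
        [⟨Γ1.splice x bs, p1, x, A⟩, ⟨Γ2.splice y as, p2, y, A'⟩]
  | swap {s1 s2 t1 t2 : Seq} :
      SubstStep [s1, s2] [t1, t2] → SubstStep [s2, s1] [t2, t1]

/-- The final substitution step, consuming the two dual cut formulas
entirely and merging the two components into a single environment. -/
inductive SubstEnd : Config → Ctx → Prop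
  | unit {Γ1 Γ2 : Ctx} {x y : Name} (us vs : List Name) :
      SubstEnd [⟨Γ1, .nil, x, .one us⟩, ⟨Γ2, .nil, y, .bot vs⟩]
        (Γ1.splice x vs ++ Γ2.splice y us)
  | unit' {Γ1 Γ2 : Ctx} {x y : Name} (us vs : List Name) :
      SubstEnd [⟨Γ2, .nil, y, .bot vs⟩, ⟨Γ1, .nil, x, .one us⟩]
        (Γ1.splice x vs ++ Γ2.splice y us)
  | atom {Γ1 Γ2 : Ctx} {x y : Name} (n : ℕ) :
      SubstEnd [⟨Γ1, .nil, x, .atom n⟩, ⟨Γ2, .nil, y, .natom n⟩]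
        (Γ1 ++ Γ2.splice y [x])
  | atom' {Γ1 Γ2 : Ctx} {x y : Name} (n : ℕ) :
      SubstEnd [⟨Γ2, .nil, y, .natom n⟩, ⟨Γ1, .nil, x, .atom n⟩]
        (Γ1 ++ Γ2.splice y [x])

/-- `RewTo c Γ` : the configuration `c` rewrites to the environment `Γ`
by `→*_distr` followed by `→*_subst`. -/
def RewTo (c : Config) (Γ : Ctx) : Prop :=
  ∃ c₁ c₂, Relation.ReflTransGen DistrStep c c₁ ∧
    Relation.ReflTransGen SubstStep c₁ c₂ ∧ SubstEnd c₂ Γ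

/-- Typing judgments: `TypesA b r P Γ` means `P ⊢ Γ` has a derivation of
rank `r` (the maximal size of a cut formula used in it), in the system with
the Cut rule if `b = true` and in the cut-free system if `b = false`. -/
inductive TypesA : Bool → ℕ → Proc → Ctx → Prop
  /-- Axiom: `[z↔x] ⊢ z:a⊥, x:a` for atomic `a`. -/
  | ax {b} (z x : Name) (n : ℕ) :
      TypesA b 0 (.fwd z x)
        (Ctx.single .nil z (.natom n) ++ Ctx.single .nil x (.atom n))
  /-- `1` rule: `x[] ⊢ {⟨x: ∗⟩ uᵢ:·}ᵢ, x:1^{ũ}`. -/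
  | one_ {b} (x : Name) (us : List Name) :
      TypesA b 0 (.close x)
        (hyps (us.map fun u => (Pre.lab [x] .star .nil, u, Form.term)) ++
          Ctx.single .nil x (.one us))
  /-- `⊥` rule. -/
  | bot_ {b r} {Q : Proc} {Ψ2 Ψv : Pre} {y v : Name} {Γ2 : Ctx} {C : Form} :
      C.hasAnn y →
      TypesA b r Q
        (Ctx.single (Ψ2 ++ Pre.lab [v] .star .nil) y .term ++ Γ2 ++ Ctx.single Ψv v C) →
      TypesA b r (.wait y Q)
        (Ctx.single Ψ2 y (.bot [v]) ++ Γ2 ++ Ctx.single Ψv v C)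
  /-- `⊗` rule (with gathering over the annotation endpoints). -/
  | tensor {b r1 r2} {P Q : Proc} {x a : Name} {A B : Form} {Γ1 : Ctx} {Ψ1 : Pre}
      (gs : List (Ctx × Pre × Name × Form)) :
      TypesA b r1 P (joinC (gs.map (·.1)) ++ Ctx.single .nil a A) →
      TypesA b r2 Q (Γ1 ++ hyps (gs.map (·.2)) ++ Ctx.single Ψ1 x B) →
      TypesA b (max r1 r2) (.output x a P Q)
        (Γ1 ++ hyps (gs.map fun g => (Pre.box [x] g.1 g.2.1, g.2.2.1, g.2.2.2)) ++
          Ctx.single Ψ1 x (.tensor (gs.map (·.2.2.1)) A B))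
  /-- `⅋` rule. -/
  | parr_ {b r} {R : Proc} {y c v : Name} {A B D : Form} {Γ2 : Ctx} {Ψ2 Ψv : Pre} :
      D.hasAnn y →
      TypesA b r R
        (Ctx.single (Ψ2 ++ Pre.box [v] (Ctx.single .nil c A) .nil) y B ++
          Γ2 ++ Ctx.single Ψv v D) →
      TypesA b r (.input y c R)
        (Ctx.single Ψ2 y (.parr [v] A B) ++ Γ2 ++ Ctx.single Ψv v D)
  /-- `&` rule. -/
  | with_ {b r1 r2} {P Q : Proc} {x : Name} {A B : Form} {Γ1 : Ctx} {Ψ1 : Pre}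
      (gs : List (Pre × Name × Form)) :
      (∀ g ∈ gs, Form.hasAnn x g.2.2) →
      TypesA b r1 P
        (Γ1 ++ hyps gs ++
          Ctx.single (Ψ1 ++ Pre.lab (gs.map (·.2.1)) .left .nil) x A) →
      TypesA b r2 Q
        (Γ1 ++ hyps gs ++
          Ctx.single (Ψ1 ++ Pre.lab (gs.map (·.2.1)) .right .nil) x B) →
      TypesA b (max r1 r2) (.pcase x P Q)
        (Γ1 ++ hyps gs ++ Ctx.single Ψ1 x (.with_ (gs.map (·.2.1)) A B))
  /-- `⊕ₗ` rule. -/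
  | oplusl {b r} {R : Proc} {y v : Name} {A B D : Form} {Γ2 : Ctx} {Ψ2 Ψv : Pre} :
      TypesA b r R (Ctx.single Ψ2 y A ++ Γ2 ++ Ctx.single Ψv v D) →
      TypesA b r (.inl y R)
        (Ctx.single Ψ2 y (.oplus [v] A B) ++ Γ2 ++
          Ctx.single (Pre.lab [y] .left Ψv) v D)
  /-- `⊕ᵣ` rule. -/
  | oplusr {b r} {R : Proc} {y v : Name} {A B D : Form} {Γ2 : Ctx} {Ψ2 Ψv : Pre} :
      TypesA b r R (Ctx.single Ψ2 y B ++ Γ2 ++ Ctx.single Ψv v D) →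
      TypesA b r (.inr y R)
        (Ctx.single Ψ2 y (.oplus [v] A B) ++ Γ2 ++
          Ctx.single (Pre.lab [y] .right Ψv) v D)
  /-- `!` rule: all other endpoints are `?`-typed. -/
  | bang_ {b r} {P : Proc} {x a : Name} {A : Form} (qs : List (Name × Form)) :
      TypesA b r P
        (hyps (qs.map fun q => (Pre.nil, q.1, Form.quest [a] q.2)) ++
          Ctx.single (Pre.lab (qs.map (·.1)) .srvq .nil) a A) →
      TypesA b r (.srv x a P)
        (hyps (qs.map fun q => (Pre.nil, q.1, Form.quest [x] q.2)) ++
          Ctx.single .nil x (.bang (qs.map (·.1)) A))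
  /-- `?` rule. -/
  | quest_ {b r} {Q : Proc} {y bb z : Name} {A C : Form} {Γ2 : Ctx} {Ψz Ψ2 : Pre} :
      TypesA b r Q (Γ2 ++ Ctx.single Ψz z C ++ Ctx.single Ψ2 bb A) →
      TypesA b r (.client y bb Q)
        (Γ2.splice bb [y] ++
          Ctx.single (Pre.lab [y] .srvq (Ψz.splice bb [y])) z (C.splice bb [y]) ++
          Ctx.single (Ψ2.splice bb [y]) y (.quest [z] (A.splice bb [y])))
  /-- Cut: the conclusion is any environment the configuration of the two
  premisses rewrites to by `→*_distr` `→*_subst`. -/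
  | cut {r1 r2} {P Q : Proc} {x y : Name} {A A' : Form} {Γ1 Γ2 Γ : Ctx} {Ψ1 Ψ2 : Pre} :
      Dual A A' →
      TypesA true r1 P (Γ1 ++ Ctx.single Ψ1 x A) →
      TypesA true r2 Q (Γ2 ++ Ctx.single Ψ2 y A') →
      RewTo [⟨Γ1, Ψ1, x, A⟩, ⟨Γ2, Ψ2, y, A'⟩] Γ →
      TypesA true (max A.size (max r1 r2)) (.cut x y P Q) Γ
  /-- Environments are multisets: exchange. -/
  | perm {b r} {P : Proc} {Γ Γ' : Ctx} :
      TypesA b r P Γ → CtxPerm Γ Γ' → TypesA b r P Γ'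

/-- `P ⊢ Γ` in the cut-free system. -/
def Types (P : Proc) (Γ : Ctx) : Prop := TypesA false 0 P Γ

/-- `P ⊢^Cut Γ` with a derivation of rank `r`. -/
def TypesCut (r : ℕ) (P : Proc) (Γ : Ctx) : Prop := TypesA true r P Γ

/-- Principal β-reduction steps used in the cut-admissibility argument. -/
inductive Beta : Proc → Proc → Prop
  | ax (x y z : Name) (Q : Proc) :
      Beta (.cut x y (.fwd z x) Q) (Q.rename y z)
  | unit (x y : Name) (Q : Proc) :
      Beta (.cut x y (.close x) (.wait y Q)) Q

theorem Ctx.append_assoc : ∀ (Γ Δ Θ : Ctx), (Γ ++ Δ) ++ Θ = Γ ++ (Δ ++ Θ)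
  | .nil, _, _ => rfl
  | .cons p x A Γ, Δ, Θ => congrArg (Ctx.cons p x A) (Ctx.append_assoc Γ Δ Θ)

theorem joinC_cons (Δ : Ctx) (l : List Ctx) : joinC (Δ :: l) = Δ ++ joinC l := rfl

theorem hyps_cons (h : Pre × Name × Form) (l : List (Pre × Name × Form)) :
    hyps (h :: l) = Ctx.single h.1 h.2.1 h.2.2 ++ hyps l := rfl

theorem TypesA.with_cut {b r P Γ} (h : TypesA b r P Γ) : TypesA true r P Γ := by
  induction h with
  | ax z x n => exact .ax z x n
  | one_ x us => exact .one_ x us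
  | bot_ h _ ih => exact .bot_ h ih
  | tensor gs _ _ ih1 ih2 => exact .tensor gs ih1 ih2
  | parr_ h _ ih => exact .parr_ h ih
  | with_ gs h _ _ ih1 ih2 => exact .with_ gs h ih1 ih2
  | oplusl _ ih => exact .oplusl ih
  | oplusr _ ih => exact .oplusr ih
  | bang_ qs _ ih => exact .bang_ qs ih
  | quest_ _ ih => exact .quest_ ih
  | cut hd _ _ hr ih1 ih2 => exact .cut hd ih1 ih2 hr
  | perm _ hp ih => exact .perm ih hp

theorem TypesA.tensor_cons {b r1 r2} {P Q : Proc} {x a y : Name} {A B C : Form}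
    {Γ Δ : Ctx} {Ψ p : Pre} (gs : List (Ctx × Pre × Name × Form))
    (hP : TypesA b r1 P (Δ ++ joinC (gs.map (·.1)) ++ Ctx.single .nil a A))
    (hQ : TypesA b r2 Q
      (Γ ++ Ctx.single p y C ++ hyps (gs.map (·.2)) ++ Ctx.single Ψ x B)) :
    TypesA b (max r1 r2) (.output x a P Q)
      (Γ ++ Ctx.single (Pre.box [x] Δ p) y C ++
        hyps (gs.map fun g => (Pre.box [x] g.1 g.2.1, g.2.2.1, g.2.2.2)) ++
        Ctx.single Ψ x (.tensor (y :: gs.map (·.2.2.1)) A B)) := by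
  have h := TypesA.tensor (Γ1 := Γ) (Ψ1 := Ψ) ((Δ, p, y, C) :: gs)
    (by simpa only [List.map_cons, joinC_cons, Ctx.append_assoc] using hP)
    (by simpa only [List.map_cons, hyps_cons, Ctx.append_assoc] using hQ)
  simpa only [List.map_cons, hyps_cons, Ctx.append_assoc] using h

/-- **Cut-in-box, output case with the boxed endpoint in the continuation.**
Suppose `P ⊢ Δ, x:A` and `Q = z[v].(S | T)` with `w ∈ fn(T)`, typed by the
`⊗` rule from `S ⊢ Δ', {Δᵢ}ᵢ, v:C` and
`T ⊢ Γ', [Ψ1]⟨z: w:A⊥⟩[Ψ2] y:B, {[Ψ_{u_i}] uᵢ:Cᵢ}ᵢ, [Ψz] z:D`. If `R0`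
satisfies (by the induction hypothesis applied to `P` and `T`)
`R0 ⊢^Cut Γ', [Ψ1]⟨z: Δ⟩[Ψ2] y:B, {[Ψ_{u_i}] uᵢ:Cᵢ}ᵢ, [Ψz] z:D` with
`rank R0 = size A`, then `R = z[v].(S | R0)` satisfies
`R ⊢^Cut Γ', ⟨z: Δ'⟩[Ψ1]⟨z: Δ⟩[Ψ2] y:B, {⟨z: Δᵢ⟩[Ψ_{u_i}] uᵢ:Cᵢ}ᵢ, [Ψz] z:(C ⊗^{y ũ} D)`
with `rank R = size A`. -/
theorem cut_in_box_output_continuation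
    {P S T R0 : Proc} {Δ Δ' Γ' : Ctx} {Ψ1 Ψ2 Ψz : Pre}
    {x w z y v : Name} {A A' B Cf D : Form}
    (gs : List (Ctx × Pre × Name × Form))
    (hdual : Dual A A')
    (hw : w ∈ Proc.fn T)
    (hP : Types P (Δ ++ Ctx.single .nil x A))
    (hS : Types S (Δ' ++ joinC (gs.map (·.1)) ++ Ctx.single .nil v Cf))
    (hT : Types T
      (Γ' ++ Ctx.single (Ψ1 ++ Pre.box [z] (Ctx.single .nil w A') Ψ2) y B ++
        hyps (gs.map (·.2)) ++ Ctx.single Ψz z D))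
    (hR0 : TypesCut A.size R0
      (Γ' ++ Ctx.single (Ψ1 ++ Pre.box [z] Δ Ψ2) y B ++
        hyps (gs.map (·.2)) ++ Ctx.single Ψz z D)) :
    TypesCut A.size (.output z v S R0)
      (Γ' ++ Ctx.single (Pre.box [z] Δ' (Ψ1 ++ Pre.box [z] Δ Ψ2)) y B ++
        hyps (gs.map fun g => (Pre.box [z] g.1 g.2.1, g.2.2.1, g.2.2.2)) ++
        Ctx.single Ψz z (.tensor (y :: gs.map (·.2.2.1)) Cf D)) := by
  -- `S` is cut-free, so the new derivation has rank `max 0 (size A)`.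
  have h := TypesA.tensor_cons gs hS.with_cut hR0
  rwa [Nat.zero_max] at h

end Boxes
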